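/- Let G ∈ ℝ^{n×m} have full column rank (so GᵀG is positive definite), set M := G Gᵀ, and let F ∈ ℝ^{n×r}. Define ρ := ‖F Fᵀ − M‖_F / λ_min(GᵀG) and assume ρ < 1/√2. Let P be the n×n matrix of the orthogonal projection of ℝ^n onto the column space of F. Then ‖(I − P) M (I − P)‖_F ≤ (1/√2) · (ρ/√(1 − ρ²)) · ‖F Fᵀ − M‖_F. -/

import Mathlib

open Matrix

/-- Frobenius inner product of two real matrices. -/
noncomputable def finner {m n : Type*} [Fintype m] [Fintype n]
    (A B : Matrix m n ℝ) : ℝ := (Aᵀ * B).trace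

/-- Frobenius norm of a real matrix. -/
noncomputable def fnorm {m n : Type*} [Fintype m] [Fintype n]
    (A : Matrix m n ℝ) : ℝ := Real.sqrt (finner A A)

open scoped Classical in
/-- Square root of a positive semidefinite real matrix (junk value `0` otherwise). -/
noncomputable def psqrt {r : ℕ} (M : Matrix (Fin r) (Fin r) ℝ) : Matrix (Fin r) (Fin r) ℝ :=
  if h : M.PosSemidef then
    (h.1.eigenvectorUnitary : Matrix (Fin r) (Fin r) ℝ) *
      diagonal ((RCLike.ofReal : ℝ → ℝ) ∘ (√·) ∘ h.1.eigenvalues) *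
      (star (h.1.eigenvectorUnitary : Matrix (Fin r) (Fin r) ℝ)) else 0

open scoped Classical in
/-- Smallest eigenvalue of a symmetric real matrix (junk value `0` otherwise). -/
noncomputable def lammin {r : ℕ} (M : Matrix (Fin r) (Fin r) ℝ) : ℝ :=
  if h : M.IsHermitian then ⨅ i, h.eigenvalues i else 0

open scoped Classical in
/-- Largest eigenvalue of a symmetric real matrix (junk value `0` otherwise). -/
noncomputable def lammax {r : ℕ} (M : Matrix (Fin r) (Fin r) ℝ) : ℝ :=
  if h : M.IsHermitian then ⨆ i, h.eigenvalues i else 0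

/-- The matrix of the orthogonal projection of `ℝ^n` onto the column space of `F`. -/
noncomputable def projCol {n r : ℕ} (F : Matrix (Fin n) (Fin r) ℝ) :
    Matrix (Fin n) (Fin n) ℝ :=
  Matrix.toEuclideanLin.symm
    ((LinearMap.range (Matrix.toEuclideanLin F)).subtype ∘ₗ
      (Submodule.orthogonalProjectionOnto (LinearMap.range (Matrix.toEuclideanLin F))).toLinearMap)

/-!
Write `E = F Fᵀ - M`, `Q = I - P`, `A = Q M Q` and `λ = λ_min(Gᵀ G)`. Because `P F = F`, we have
`Q M = -Q E`, so `Q M² Q = Q E² Q`. Three trace inequalities follow: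
`λ tr A ≤ tr (Q E²)` by compressing `λ M ⪯ M²` with `Q`;
`2 tr (Q E²) ≤ ‖E‖² + ‖A‖²`, which is `tr (P E P E) ≥ 0` expanded with `P = I - Q`;
`λ ‖A‖² ≤ ‖E‖² tr A`, since `λ A ⪯ Q E² Q ⪯ ‖E‖² I`.
Chaining them gives `(2λ² - ‖E‖²) ‖A‖² ≤ ‖E‖⁴`, and substituting `‖E‖ = ρ λ` yields the bound.
-/

open scoped MatrixOrder

namespace Matrix

variable {n : Type*} [Fintype n]

theorem trace_mono {A B : Matrix n n ℝ} (h : A ≤ B) : A.trace ≤ B.trace :=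
  (tracePositiveLinearMap n ℝ ℝ).mono h

theorem trace_nonneg_of_nonneg {A : Matrix n n ℝ} (hA : 0 ≤ A) : 0 ≤ A.trace :=
  (tracePositiveLinearMap n ℝ ℝ).map_nonneg hA

theorem trace_mul_nonneg [DecidableEq n] {A B : Matrix n n ℝ} (hA : 0 ≤ A) (hB : 0 ≤ B) :
    0 ≤ (A * B).trace := by
  rw [← CFC.sqrt_mul_sqrt_self B, ← Matrix.mul_assoc, trace_mul_cycle]
  have h := star_left_conjugate_nonneg hA (CFC.sqrt B)
  rw [(CFC.sqrt_nonneg B).isSelfAdjoint.star_eq] at h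
  exact trace_nonneg_of_nonneg h

theorem trace_mul_le_trace_mul [DecidableEq n] {A B C : Matrix n n ℝ} (hA : 0 ≤ A)
    (hBC : B ≤ C) : (A * B).trace ≤ (A * C).trace := by
  have h := trace_mul_nonneg hA (sub_nonneg.mpr hBC)
  rwa [Matrix.mul_sub, trace_sub, sub_nonneg] at h

theorem le_trace_smul_one [DecidableEq n] {B : Matrix n n ℝ} (hB : 0 ≤ B) : B ≤ B.trace • 1 := by
  have hB' := nonneg_iff_posSemidef.mp hB
  rw [← Algebra.algebraMap_eq_smul_one,
    le_algebraMap_iff_spectrum_le hB'.isHermitian.isSelfAdjoint,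
    hB'.isHermitian.spectrum_real_eq_range_eigenvalues, hB'.isHermitian.trace_eq_sum_eigenvalues]
  rintro _ ⟨i, rfl⟩
  exact Finset.single_le_sum (fun j _ => hB'.eigenvalues_nonneg j) (Finset.mem_univ i)

theorem smul_mul_transpose_le_of_smul_one_le {m : Type*} [Fintype m] [DecidableEq m]
    {G : Matrix n m ℝ} {c : ℝ} (h : c • 1 ≤ Gᵀ * G) : c • (G * Gᵀ) ≤ G * Gᵀ * (G * Gᵀ) := by
  have hconj := (le_iff.mp h).mul_mul_conjTranspose_same G
  rw [conjTranspose_eq_transpose_of_trivial, Matrix.mul_sub, Matrix.sub_mul, Matrix.mul_smul,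
    Matrix.mul_one, Matrix.smul_mul] at hconj
  rw [le_iff]
  simpa only [Matrix.mul_assoc] using hconj

end Matrix

theorem IsSelfAdjoint.fnorm_eq {n : Type*} [Fintype n] {X : Matrix n n ℝ}
    (hX : IsSelfAdjoint X) : fnorm X = √(X * X).trace := by
  rw [fnorm, finner, ← conjTranspose_eq_transpose_of_trivial, ← star_eq_conjTranspose, hX.star_eq]

section Lammin

variable {r : ℕ} {A : Matrix (Fin r) (Fin r) ℝ}

theorem Matrix.IsHermitian.lammin_eq (hA : A.IsHermitian) :
    lammin A = ⨅ i, hA.eigenvalues i := by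
  rw [lammin, dif_pos hA]

theorem Matrix.PosDef.lammin_pos [Nonempty (Fin r)] (hA : A.PosDef) : 0 < lammin A := by
  obtain ⟨i, hi⟩ := exists_eq_ciInf_of_finite (f := hA.isHermitian.eigenvalues)
  rw [hA.isHermitian.lammin_eq, ← hi]
  exact hA.eigenvalues_pos i

theorem Matrix.IsHermitian.lammin_smul_one_le (hA : A.IsHermitian) : lammin A • 1 ≤ A := by
  rw [← Algebra.algebraMap_eq_smul_one, algebraMap_le_iff_le_spectrum hA.isSelfAdjoint,
    hA.spectrum_real_eq_range_eigenvalues, hA.lammin_eq]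
  rintro _ ⟨i, rfl⟩
  exact ciInf_le (Set.finite_range _).bddBelow i

end Lammin

section ProjCol

variable {n r : ℕ}

theorem toEuclideanCLM_projCol (F : Matrix (Fin n) (Fin r) ℝ) :
    toEuclideanCLM (n := Fin n) (𝕜 := ℝ) (projCol F) =
      (LinearMap.range (toEuclideanLin F)).starProjection := by
  ext1 x
  exact congrArg (· x) (toEuclideanLin.apply_symm_apply _)

theorem isStarProjection_projCol (F : Matrix (Fin n) (Fin r) ℝ) :
    IsStarProjection (projCol F) := by
  have h := isStarProjection_starProjection (U := LinearMap.range (toEuclideanLin F))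
  rw [← toEuclideanCLM_projCol] at h
  refine ⟨EquivLike.injective (toEuclideanCLM (n := Fin n) (𝕜 := ℝ)) ?_,
    EquivLike.injective (toEuclideanCLM (n := Fin n) (𝕜 := ℝ)) ?_⟩
  · rw [map_mul]
    exact h.isIdempotentElem
  · rw [map_star]
    exact h.isSelfAdjoint

theorem projCol_mul_self (F : Matrix (Fin n) (Fin r) ℝ) : projCol F * F = F := by
  apply toEuclideanLin.injective
  ext1 x
  have hx : toEuclideanLin F x ∈ LinearMap.range (toEuclideanLin F) :=
    LinearMap.mem_range_self _ x
  rw [toLpLin_mul, LinearMap.comp_apply, ← coe_toEuclideanCLM_eq_toEuclideanLin,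
    ContinuousLinearMap.coe_coe, toEuclideanCLM_projCol,
    Submodule.starProjection_eq_self_iff.mpr hx]

end ProjCol

theorem IsIdempotentElem.trace_mul_mul_self {n : Type*} [Fintype n] {Q : Matrix n n ℝ}
    (hQ : IsIdempotentElem Q) (X : Matrix n n ℝ) : (Q * X * Q).trace = (Q * X).trace := by
  rw [trace_mul_cycle, hQ.eq]

section Compression

variable {n : Type*} [Fintype n] {M E Q : Matrix n n ℝ}

theorem compress_mul_self_eq (hQ : IsSelfAdjoint Q) (hE : IsSelfAdjoint E)
    (hM : IsSelfAdjoint M) (hQEM : Q * (E + M) = 0) :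
    Q * (M * M) * Q = Q * (E * E) * Q := by
  have hQM : Q * M = -(Q * E) := by
    rw [Matrix.mul_add] at hQEM
    exact (neg_eq_of_add_eq_zero_right hQEM).symm
  have hMQ : M * Q = -(E * Q) := by
    simpa [star_mul, hQ.star_eq, hE.star_eq, hM.star_eq] using congrArg star hQM
  calc Q * (M * M) * Q = (Q * M) * (M * Q) := by simp only [Matrix.mul_assoc]
    _ = Q * (E * E) * Q := by rw [hQM, hMQ, neg_mul_neg]; simp only [Matrix.mul_assoc]

theorem lam_mul_trace_compress_le (hQ : IsStarProjection Q) (hE : IsSelfAdjoint E) (hM : 0 ≤ M)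
    (hQEM : Q * (E + M) = 0) {lam : ℝ} (hMM : lam • M ≤ M * M) :
    lam * (Q * M * Q).trace ≤ (Q * (E * E)).trace :=
  calc lam * (Q * M * Q).trace = (Q * (lam • M) * Q).trace := by
        rw [Matrix.mul_smul, Matrix.smul_mul, trace_smul, smul_eq_mul]
    _ ≤ (Q * (M * M) * Q).trace := trace_mono (hQ.isSelfAdjoint.conjugate_le_conjugate hMM)
    _ = (Q * (E * E)).trace := by
        rw [compress_mul_self_eq hQ.isSelfAdjoint hE hM.isSelfAdjoint hQEM,
          hQ.isIdempotentElem.trace_mul_mul_self]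

variable [DecidableEq n]

theorem two_mul_trace_compress_le (hQ : IsStarProjection Q) (hE : IsSelfAdjoint E)
    (hQEM : Q * (E + M) = 0) :
    2 * (Q * (E * E)).trace ≤ (E * E).trace + (Q * M * Q * (Q * M * Q)).trace := by
  have hP := hQ.one_sub
  have hPEPE : 0 ≤ ((1 - Q) * (E * (1 - Q) * E)).trace := by
    have h := star_left_conjugate_nonneg hP.nonneg E
    rw [hE.star_eq] at h
    exact trace_mul_nonneg hP.nonneg h
  have hQEQ : Q * E * Q = -(Q * M * Q) := by
    rw [Matrix.mul_add] at hQEM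
    rw [eq_neg_of_add_eq_zero_left hQEM, Matrix.neg_mul]
  have hsq : (Q * M * Q * (Q * M * Q)).trace = (Q * (E * Q * E)).trace := by
    rw [← neg_mul_neg, ← hQEQ, ← hQ.isIdempotentElem.trace_mul_mul_self]
    congr 1
    simp only [Matrix.mul_assoc]
    rw [← Matrix.mul_assoc Q Q, hQ.isIdempotentElem.eq]
  have hexp : (1 - Q) * (E * (1 - Q) * E) =
      E * E - E * Q * E - Q * (E * E) + Q * (E * Q * E) := by
    noncomm_ring
  have hcyc : (E * Q * E).trace = (Q * (E * E)).trace := by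
    rw [trace_mul_cycle, trace_mul_comm]
  rw [hexp, trace_add, trace_sub, trace_sub, hcyc] at hPEPE
  linarith

theorem lam_mul_trace_sq_compress_le (hQ : IsStarProjection Q) (hE : IsSelfAdjoint E)
    (hM : 0 ≤ M) (hQEM : Q * (E + M) = 0) {lam : ℝ} (hMM : lam • M ≤ M * M) :
    lam * (Q * M * Q * (Q * M * Q)).trace ≤ (E * E).trace * (Q * M * Q).trace := by
  have hEE := hE.mul_self_nonneg
  have hbound : lam • (Q * M * Q) ≤ (E * E).trace • 1 :=
    calc lam • (Q * M * Q) = Q * (lam • M) * Q := by rw [Matrix.mul_smul, Matrix.smul_mul]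
      _ ≤ Q * (M * M) * Q := hQ.isSelfAdjoint.conjugate_le_conjugate hMM
      _ = Q * (E * E) * Q := compress_mul_self_eq hQ.isSelfAdjoint hE hM.isSelfAdjoint hQEM
      _ ≤ Q * ((E * E).trace • 1) * Q :=
          hQ.isSelfAdjoint.conjugate_le_conjugate (le_trace_smul_one hEE)
      _ = (E * E).trace • Q := by
          rw [Matrix.mul_smul, Matrix.mul_one, Matrix.smul_mul, hQ.isIdempotentElem.eq]
      _ ≤ (E * E).trace • 1 :=
          smul_le_smul_of_nonneg_left (sub_nonneg.mp hQ.one_sub.nonneg)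
            (trace_nonneg_of_nonneg hEE)
  have h := trace_mul_le_trace_mul (hQ.isSelfAdjoint.conjugate_nonneg hM) hbound
  rwa [Matrix.mul_smul, Matrix.mul_smul, Matrix.mul_one, trace_smul, trace_smul, smul_eq_mul,
    smul_eq_mul] at h

theorem compress_sq_bound (hQ : IsStarProjection Q) (hE : IsSelfAdjoint E) (hM : 0 ≤ M)
    (hQEM : Q * (E + M) = 0) {lam : ℝ} (hlam : 0 ≤ lam) (hMM : lam • M ≤ M * M) :
    (2 * lam ^ 2 - (E * E).trace) * (Q * M * Q * (Q * M * Q)).trace ≤ (E * E).trace ^ 2 := by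
  have ha := lam_mul_trace_compress_le hQ hE hM hQEM hMM
  have hb := two_mul_trace_compress_le (M := M) hQ hE hQEM
  have hc := lam_mul_trace_sq_compress_le hQ hE hM hQEM hMM
  have hc0 := trace_nonneg_of_nonneg hE.mul_self_nonneg
  linarith [mul_le_mul_of_nonneg_left ha hc0, mul_le_mul_of_nonneg_left hb hc0,
    mul_le_mul_of_nonneg_left hc hlam]

end Compression

theorem sqrt_le_of_two_sq_sub_mul_le {c lam t ρ : ℝ} (hc : 0 ≤ c) (hlam : 0 < lam)
    (ht : 0 ≤ t) (hρdef : ρ = √c / lam) (hρ : ρ < 1 / √2) (h : (2 * lam ^ 2 - c) * t ≤ c ^ 2) :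
    √t ≤ 1 / √2 * (ρ / √(1 - ρ ^ 2)) * √c := by
  have hρ0 : 0 ≤ ρ := hρdef ▸ by positivity
  have hρc : c = ρ ^ 2 * lam ^ 2 := by
    rw [hρdef, div_pow, Real.sq_sqrt hc, div_mul_cancel₀ _ (by positivity)]
  have hρ2 : ρ ^ 2 < 1 / 2 := by
    simpa [div_pow] using pow_lt_pow_left₀ hρ hρ0 two_ne_zero
  rw [Real.sqrt_le_left (by positivity), mul_pow, mul_pow, div_pow, div_pow,
    Real.sq_sqrt (by linarith : (0 : ℝ) ≤ 1 - ρ ^ 2), Real.sq_sqrt hc, Real.sq_sqrt zero_le_two,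
    one_pow, div_mul_div_comm, one_mul, div_mul_eq_mul_div, le_div_iff₀ (by linarith)]
  refine le_of_mul_le_mul_left ?_ (by positivity : 0 < lam ^ 2)
  calc lam ^ 2 * (t * (2 * (1 - ρ ^ 2))) = 2 * lam ^ 2 * t - 2 * (ρ ^ 2 * lam ^ 2) * t := by
        ring
    _ ≤ c ^ 2 := by rw [← hρc]; nlinarith [mul_nonneg hc ht]
    _ = lam ^ 2 * (ρ ^ 2 * c) := by rw [sq c]; nth_rw 1 [hρc]; ring

/-- matrix form of the paper's appendix Lemma 14.
Bound on the principal-angle quantity for symmetric factorizations. -/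
theorem stmt_7 {n m r : ℕ}
    (G : Matrix (Fin n) (Fin m) ℝ) (hG : (Gᵀ * G).PosDef)
    (M : Matrix (Fin n) (Fin n) ℝ) (hM : M = G * Gᵀ)
    (F : Matrix (Fin n) (Fin r) ℝ)
    (ρ : ℝ) (hρdef : ρ = fnorm (F * Fᵀ - M) / lammin (Gᵀ * G))
    (hρ : ρ < 1 / Real.sqrt 2)
    (P : Matrix (Fin n) (Fin n) ℝ) (hP : P = projCol F) :
    fnorm ((1 - P) * M * (1 - P)) ≤
      1 / Real.sqrt 2 * (ρ / Real.sqrt (1 - ρ ^ 2)) * fnorm (F * Fᵀ - M) := by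
  rcases isEmpty_or_nonempty (Fin m) with hm | hm
  · -- `G` has no columns, and `lammin (Gᵀ * G)` is an empty infimum, which is `0` in `ℝ`
    have hM0 : M = 0 := by
      rw [hM]
      ext i j
      simp [mul_apply]
    have hρ0 : ρ = 0 := by simp [hρdef, hG.isHermitian.lammin_eq]
    simp [hM0, hρ0, fnorm, finner]
  subst hP
  set E := F * Fᵀ - M
  set Q := 1 - projCol F
  have hQ : IsStarProjection Q := (isStarProjection_projCol F).one_sub
  have hM0 : 0 ≤ M := hM ▸ (posSemidef_self_mul_conjTranspose G).nonneg
  have hE : IsSelfAdjoint E :=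
    (isHermitian_mul_conjTranspose_self F).isSelfAdjoint.sub hM0.isSelfAdjoint
  have hQEM : Q * (E + M) = 0 := by
    rw [sub_add_cancel, ← Matrix.mul_assoc, Matrix.sub_mul, Matrix.one_mul, projCol_mul_self,
      sub_self, Matrix.zero_mul]
  have hMM : lammin (Gᵀ * G) • M ≤ M * M :=
    hM ▸ smul_mul_transpose_le_of_smul_one_le hG.isHermitian.lammin_smul_one_le
  have hA := hQ.isSelfAdjoint.conjugate_nonneg hM0
  rw [hE.fnorm_eq] at hρdef
  rw [hA.isSelfAdjoint.fnorm_eq, hE.fnorm_eq]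
  exact sqrt_le_of_two_sq_sub_mul_le (trace_nonneg_of_nonneg hE.mul_self_nonneg) hG.lammin_pos
    (trace_mul_nonneg hA hA) hρdef hρ
    (compress_sq_bound hQ hE hM0 hQEM hG.lammin_pos.le hMM)
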